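/- Let a_{i,j} be nonnegative real numbers indexed by pairs of natural numbers i, j, and suppose there is a real number α < 2 such that for every i one has a_{i,i} = 1 and ∑_j a_{i,j} = α. Let x_j, y_j be nonnegative reals indexed by natural numbers j. If for every i one has ∑_j a_{i,j} x_j = ∑_j a_{i,j} y_j = 1, then x_j = y_j for all j. -/

import Mathlib

/-!
Let `M = sup_j |x_j - y_j|`, which is finite because the diagonal entry gives `x_j, y_j ≤ 1`.
Subtracting the two equations of row `i` and separating the diagonal term gives
`|x_i - y_i| ≤ ∑_{j ≠ i} a_{i,j} |x_j - y_j| ≤ (α - 1) M`, so `M ≤ (α - 1) M` with `α - 1 < 1`,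
forcing `M = 0`.
-/

open scoped ENNReal

namespace ENNReal

variable {ι : Type*}

lemma eq_zero_of_le_mul_of_lt_one {c M : ℝ≥0∞} (hc : c < 1) (hM : M ≠ ∞) (h : M ≤ c * M) :
    M = 0 := by
  by_contra hM0
  have hlt : c * M < M := by
    rw [mul_comm]
    simpa using ENNReal.mul_lt_mul_right hM0 hM hc
  exact h.not_gt hlt

lemma sub_one_lt_one_of_lt_two {α : ℝ≥0∞} (hα : α < 2) : α - 1 < 1 := by
  rcases le_or_gt 1 α with h1 | h1
  · exact ENNReal.sub_lt_of_lt_add h1 (by rwa [one_add_one_eq_two])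
  · rw [tsub_eq_zero_of_le h1.le]
    exact one_pos

lemma le_tsum_mul_of_apply_eq_one {r f : ι → ℝ≥0∞} {i : ι} (hri : r i = 1) :
    f i ≤ ∑' j, r j * f j :=
  calc f i = r i * f i := by rw [hri, one_mul]
    _ ≤ ∑' j, r j * f j := ENNReal.le_tsum i

lemma tsub_le_mul_of_tsum_mul_eq {r f g : ι → ℝ≥0∞} {i : ι} {M : ℝ≥0∞} (hri : r i = 1)
    (hfg : ∑' j, r j * f j = ∑' j, r j * g j) (hfin : ∑' j, r j * f j ≠ ∞)
    (hM : ∀ j, g j ≤ f j + M) :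
    f i - g i ≤ (∑' j, r j - 1) * M := by
  classical
  set Sf := ∑' j, if j = i then 0 else r j * f j
  set Sg := ∑' j, if j = i then 0 else r j * g j
  have hsplit : f i + Sf = g i + Sg := by
    rwa [ENNReal.tsum_eq_add_tsum_ite i, ENNReal.tsum_eq_add_tsum_ite (f := fun j => r j * g j) i,
      hri, one_mul, one_mul] at hfg
  have hoff : ∑' j, (if j = i then 0 else r j) = ∑' j, r j - 1 := by
    rw [ENNReal.tsum_eq_add_tsum_ite (f := r) i, hri, ENNReal.add_sub_cancel_left one_ne_top]
  have hSg : Sg ≤ Sf + (∑' j, r j - 1) * M := by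
    rw [← hoff, ← ENNReal.tsum_mul_right, ← ENNReal.tsum_add]
    refine ENNReal.tsum_le_tsum fun j => ?_
    split_ifs
    · simp
    · calc r j * g j ≤ r j * (f j + M) := by gcongr; exact hM j
        _ = r j * f j + r j * M := mul_add _ _ _
  have hSf : Sf ≠ ∞ := by
    refine ne_top_of_le_ne_top hfin ?_
    rw [ENNReal.tsum_eq_add_tsum_ite (f := fun j => r j * f j) i]
    exact le_add_self
  rw [tsub_le_iff_left]
  refine (ENNReal.add_le_add_iff_right hSf).1 ?_
  calc f i + Sf = g i + Sg := hsplit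
    _ ≤ g i + (Sf + (∑' j, r j - 1) * M) := by gcongr
    _ = g i + (∑' j, r j - 1) * M + Sf := by ring

end ENNReal

/-- Infinite-dimensional linear algebra lemma (Ellenberg–Venkatesh–Westerland):
if `a_{i,j}` are nonnegative reals (in `[0,∞]`) with `a_{i,i} = 1` and `∑_j a_{i,j} = α` for
some `α < 2`, and `x_j, y_j` are nonnegative reals with `∑_j a_{i,j} x_j = ∑_j a_{i,j} y_j = 1`
for all `i`, then `x_j = y_j` for all `j`. -/
theorem la_lemma (a : ℕ → ℕ → ℝ≥0∞) (α : ℝ≥0∞) (hα : α < 2)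
    (hdiag : ∀ i, a i i = 1) (hrow : ∀ i, ∑' j, a i j = α)
    (x y : ℕ → ℝ≥0∞)
    (hx : ∀ i, ∑' j, a i j * x j = 1) (hy : ∀ i, ∑' j, a i j * y j = 1) :
    ∀ j, x j = y j := by
  set M := ⨆ j, (x j - y j) ⊔ (y j - x j)
  have hM : ∀ j, x j - y j ≤ M ∧ y j - x j ≤ M := fun j =>
    sup_le_iff.1 (le_iSup (fun j => (x j - y j) ⊔ (y j - x j)) j)
  have hx_le : ∀ j, x j ≤ 1 := fun j =>
    (ENNReal.le_tsum_mul_of_apply_eq_one (hdiag j)).trans (hx j).le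
  have hy_le : ∀ j, y j ≤ 1 := fun j =>
    (ENNReal.le_tsum_mul_of_apply_eq_one (hdiag j)).trans (hy j).le
  have hM_le : M ≤ 1 :=
    iSup_le fun j => sup_le (tsub_le_self.trans (hx_le j)) (tsub_le_self.trans (hy_le j))
  have hM_fin : M ≠ ∞ := (hM_le.trans_lt ENNReal.one_lt_top).ne
  have hcontr : M ≤ (α - 1) * M := by
    refine iSup_le fun i => sup_le ?_ ?_ <;> rw [← hrow i]
    · exact ENNReal.tsub_le_mul_of_tsum_mul_eq (hdiag i) ((hx i).trans (hy i).symm)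
        (by simp [hx i]) fun j => tsub_le_iff_left.1 (hM j).2
    · exact ENNReal.tsub_le_mul_of_tsum_mul_eq (hdiag i) ((hy i).trans (hx i).symm)
        (by simp [hy i]) fun j => tsub_le_iff_left.1 (hM j).1
  have hM0 : M = 0 :=
    ENNReal.eq_zero_of_le_mul_of_lt_one (ENNReal.sub_one_lt_one_of_lt_two hα) hM_fin hcontr
  intro j
  obtain ⟨hxy, hyx⟩ := hM j
  rw [hM0, nonpos_iff_eq_zero, tsub_eq_zero_iff_le] at hxy hyx
  exact le_antisymm hxy hyx
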